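/- Let α and β be long roots with α ≤ β in the order determined by Δ (i.e. β − α is a nonnegative integer combination of simple roots). If 0 < α ≤ β, or if α ≤ β < 0, then there is a simple path from β to α. -/

import Mathlib

open scoped RealInnerProductSpace Classical

noncomputable section

variable {V : Type} [NormedAddCommGroup V] [InnerProductSpace ℝ V] [FiniteDimensional ℝ V]

/-- The orthogonal reflection of `V` in the hyperplane orthogonal to `α`
(the reflection `s_α` when `α` is a root). -/
def sref (α : V) : V ≃ₗᵢ[ℝ] V := Submodule.reflection (Submodule.span ℝ {α})ᗮ

/-- The pairing `⟨β, γ∨⟩ = 2(β|γ)/(γ|γ)` of a vector with the coroot of `γ`. -/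
def cpair (β γ : V) : ℝ := 2 * ⟪β, γ⟫ / ⟪γ, γ⟫

/-- An irreducible reduced (crystallographic) root system in the real inner product
space `V`, the inner product being invariant under the Weyl group (automatic, since
reflections are isometries), normalized so that the shortest roots have squared length `1`. -/
structure NRootSystem (V : Type) [NormedAddCommGroup V] [InnerProductSpace ℝ V]
    [FiniteDimensional ℝ V] where
  Φ : Finset V
  nonempty : Φ.Nonempty
  zero_not_mem : (0 : V) ∉ Φ
  span_eq_top : Submodule.span ℝ (Φ : Set V) = ⊤
  reduced : ∀ α ∈ Φ, ∀ t : ℝ, t • α ∈ Φ → t = 1 ∨ t = -1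
  pairing_int : ∀ α ∈ Φ, ∀ β ∈ Φ, ∃ n : ℤ, 2 * ⟪β, α⟫ = n * ⟪α, α⟫
  reflect_mem : ∀ α ∈ Φ, ∀ β ∈ Φ, sref α β ∈ Φ
  irreducible : ∀ S : Finset V, S ⊆ Φ → S.Nonempty → (Φ \ S).Nonempty →
    ∃ α ∈ S, ∃ β ∈ Φ \ S, ⟪α, β⟫ ≠ 0
  norm_one_le : ∀ α ∈ Φ, 1 ≤ ⟪α, α⟫
  exists_norm_one : ∃ α ∈ Φ, ⟪α, α⟫ = 1

namespace NRootSystem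

variable (R : NRootSystem V)

/-- `r`, the maximal squared length of a root. -/
def r : ℝ := R.Φ.sup' R.nonempty fun α => ⟪α, α⟫

/-- long roots -/
def IsLong (α : V) : Prop := α ∈ R.Φ ∧ ⟪α, α⟫ = R.r

/-- short roots -/
def IsShort (α : V) : Prop := α ∈ R.Φ ∧ ⟪α, α⟫ < R.r

/-- The Weyl group `W`, generated by the reflections in the roots. -/
def Weyl : Subgroup (V ≃ₗᵢ[ℝ] V) := Subgroup.closure (sref '' (R.Φ : Set V))

end NRootSystem

/-- The standard parabolic subgroup `W_I` generated by the reflections in `I ⊆ Δ`. -/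
def WeylP (I : Finset V) : Subgroup (V ≃ₗᵢ[ℝ] V) := Subgroup.closure (sref '' (I : Set V))

/-- A base (set of simple roots) `Δ` of the root system, together with the
integral coordinates `coeff γ α` of each root `γ` in the basis `Δ`; every root is a
nonnegative or a nonpositive integral combination of the simple roots. -/
structure Base {V : Type} [NormedAddCommGroup V] [InnerProductSpace ℝ V]
    [FiniteDimensional ℝ V] (R : NRootSystem V) where
  Δ : Finset V
  subset : Δ ⊆ R.Φ
  indep : LinearIndependent ℝ (fun a : {x : V // x ∈ Δ} => (a : V))
  coeff : V → V → ℤ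
  coeff_spec : ∀ γ ∈ R.Φ, γ = ∑ α ∈ Δ, (coeff γ α : ℝ) • α
  coeff_sign : ∀ γ ∈ R.Φ, (∀ α ∈ Δ, 0 ≤ coeff γ α) ∨ (∀ α ∈ Δ, coeff γ α ≤ 0)

namespace Base

variable {R : NRootSystem V} (B : Base R)

/-- positive roots -/
def IsPos (γ : V) : Prop := γ ∈ R.Φ ∧ ∀ α ∈ B.Δ, 0 ≤ B.coeff γ α

/-- negative roots -/
def IsNeg (γ : V) : Prop := γ ∈ R.Φ ∧ ∀ α ∈ B.Δ, B.coeff γ α ≤ 0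

/-- the height of a root -/
def ht (γ : V) : ℤ := ∑ α ∈ B.Δ, B.coeff γ α

/-- the dual height `ht∨ γ = ht (γ∨)`: the height of the coroot `γ∨ = 2γ/(γ|γ)`
with respect to the basis of simple coroots `α∨ = 2α/(α|α)`, `α ∈ Δ`. -/
def htv (γ : V) : ℝ := ∑ α ∈ B.Δ, (B.coeff γ α : ℝ) * ⟪α, α⟫ / ⟪γ, γ⟫

/-- The length of `w`: the minimal length of an expression of `w` as a product of
simple reflections. -/
def len (w : V ≃ₗᵢ[ℝ] V) : ℕ :=
  sInf {n | ∃ g : Fin n → V, (∀ i, g i ∈ B.Δ) ∧ w = (List.ofFn fun i => sref (g i)).prod}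

/-- `w` is the longest element of the subgroup `H`. -/
def IsLongest (H : Subgroup (V ≃ₗᵢ[ℝ] V)) (w : V ≃ₗᵢ[ℝ] V) : Prop :=
  w ∈ H ∧ ∀ u ∈ H, B.len u ≤ B.len w

/-- `X_I = {w ∈ W | w(Φ_I⁺) ⊆ Φ⁺}`, the set of minimal length coset
representatives of `W/W_I`. -/
def XI (I : Finset V) : Set (V ≃ₗᵢ[ℝ] V) :=
  {w | w ∈ R.Weyl ∧
    ∀ γ, γ ∈ R.Φ → γ ∈ Submodule.span ℝ (I : Set V) → B.IsPos γ → B.IsPos (w γ)}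

/-- `h` is the highest root. -/
def IsHighest (h : V) : Prop :=
  h ∈ R.Φ ∧ ∀ γ ∈ R.Φ, ∀ α ∈ B.Δ, B.coeff γ α ≤ B.coeff h α

/-- `Ĩ = {α ∈ Δ | (h|α) = 0}`, the simple roots orthogonal to the highest root `h`. -/
def Itil (h : V) : Finset V := B.Δ.filter fun α => ⟪h, α⟫ = 0

/-- The level `L(α)` of a long root `α`, where `h` is the highest root:
`L(α) = ht∨(h) − ht∨(α)` if `α > 0` and `L(α) = ht∨(h) − ht∨(α) − 1` if `α < 0`. -/
def level (h α : V) : ℝ :=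
  if B.IsPos α then B.htv h - B.htv α else B.htv h - B.htv α - 1

/-- The elementary step relation `β →_γ α` on long roots (`γ` a positive root):
`α = s_γ(β)` and `L(α) = L(β) + 1`. -/
def Step (h γ β α : V) : Prop :=
  R.IsLong β ∧ R.IsLong α ∧ B.IsPos γ ∧ α = sref γ β ∧
    B.level h α = B.level h β + 1

/-- `g` is the sequence of positive roots of a path
`β = β₀ →_{g 0} β₁ →_{g 1} ⋯ →_{g (n-1)} β_n = α` from `β` to `α`. -/
def IsPathWord (h : V) {n : ℕ} (g : Fin n → V) (β α : V) : Prop :=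
  ∃ c : Fin (n + 1) → V, c 0 = β ∧ c (Fin.last n) = α ∧
    ∀ i : Fin n, B.Step h (g i) (c i.castSucc) (c i.succ)

/-- a path all of whose steps use simple roots -/
def IsSimplePathWord (h : V) {n : ℕ} (g : Fin n → V) (β α : V) : Prop :=
  B.IsPathWord h g β α ∧ ∀ i, g i ∈ B.Δ

/-- there is a path from `β` to `α`, i.e. `α ⪯ β` -/
def HasPath (h β α : V) : Prop := ∃ (n : ℕ) (g : Fin n → V), B.IsPathWord h g β α

/-- there is a simple path from `β` to `α` -/
def HasSimplePath (h β α : V) : Prop :=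
  ∃ (n : ℕ) (g : Fin n → V), B.IsSimplePathWord h g β α

/-- The covering relation `w →_γ w'` for the Bruhat order:
`w' = s_γ w` and `l(w') = l(w) + 1`, for a positive root `γ`. -/
def BStep (γ : V) (w w' : V ≃ₗᵢ[ℝ] V) : Prop :=
  B.IsPos γ ∧ w' = sref γ * w ∧ B.len w' = B.len w + 1

/-- The Bruhat order on `W`: the reflexive–transitive closure of the covering
relations. -/
def bruhatLE : (V ≃ₗᵢ[ℝ] V) → (V ≃ₗᵢ[ℝ] V) → Prop :=
  Relation.ReflTransGen fun w w' => ∃ γ, B.BStep γ w w'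

/-- `x` is an element of `W` with `x(β) = α` of the minimal possible length
`|L(α) − L(β)|` (this is the element `x_{αβ}` when it exists). -/
def MinTake (h β α : V) (x : V ≃ₗᵢ[ℝ] V) : Prop :=
  x ∈ R.Weyl ∧ x β = α ∧ (B.len x : ℝ) = |B.level h α - B.level h β|

/-- `g` is a reduced expression of `x` as a product of simple reflections. -/
def IsReducedWord {n : ℕ} (g : Fin n → V) (x : V ≃ₗᵢ[ℝ] V) : Prop :=
  (∀ i, g i ∈ B.Δ) ∧ x = (List.ofFn fun i => sref (g i)).prod ∧ n = B.len x

/-- The depth of a positive root `β`: the minimal integer `k` such that there is an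
element `w` of `W` of length `k` with `w(β) < 0`. -/
def depth (β : V) : ℕ := sInf {n | ∃ w ∈ R.Weyl, B.len w = n ∧ B.IsNeg (w β)}

end Base

/-!
Induction on `ht β - ht α`. If `α ≠ β`, some simple root `s` has a positive coefficient in
`β - α` and `(s|β - α) > 0`. For a positive long root `x ≠ s` with `(s|x) > 0` one has
`⟨s, x∨⟩ = 1`, so `x → s_s x = x - m s` is a simple step with `m (s|s) = r`; as the coordinates
of coroots in the simple coroots are integers, `m` is at most the `s`-coefficient of `β - α`.
If `(s|β) > 0` this shrinks the gap from above (`β → s_s β ≥ α`), otherwise `(s|α) < 0` and it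
shrinks it from below (`s_s α → α` with `s_s α ≤ β`). The negative case is the positive one for
`-β ≤ -α`, since negation reverses steps between roots of the same sign.
-/

open Finset Relation

section Reflection

variable {E : Type} [NormedAddCommGroup E] [InnerProductSpace ℝ E]

lemma sref_apply (γ x : E) : sref γ x = x - cpair x γ • γ := by
  rw [sref, Submodule.reflection_orthogonal_apply, Submodule.reflection_singleton_apply, cpair,
    RCLike.ofReal_real_eq_id, id, real_inner_self_eq_norm_sq, real_inner_comm, two_smul,
    mul_div_assoc, two_mul, add_smul]
  abel

lemma sref_self (γ : E) : sref γ γ = -γ :=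
  Submodule.reflection_orthogonalComplement_singleton_eq_neg γ

lemma sref_sref (γ x : E) : sref γ (sref γ x) = x :=
  Submodule.reflection_reflection _ x

lemma inner_sref_self_left (γ x : E) : ⟪γ, sref γ x⟫ = -⟪γ, x⟫ := by
  rw [← (sref γ).inner_map_map γ (sref γ x), sref_self, sref_sref, inner_neg_left]

lemma cpair_mul_inner_self {x γ : E} (hγ : ⟪γ, γ⟫ ≠ 0) : cpair x γ * ⟪γ, γ⟫ = 2 * ⟪x, γ⟫ :=
  div_mul_cancel₀ _ hγ

lemma exists_pos_inner_of_eq_sum_smul {S : Finset E} {c : E → ℝ} {δ : E}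
    (hc : ∀ t ∈ S, 0 ≤ c t) (hδ : δ = ∑ t ∈ S, c t • t) (hne : δ ≠ 0) :
    ∃ t ∈ S, 0 < c t ∧ 0 < ⟪t, δ⟫ := by
  by_contra! H
  refine hne (real_inner_self_nonpos.mp ?_)
  calc ⟪δ, δ⟫ = ∑ t ∈ S, c t * ⟪t, δ⟫ := by
        nth_rewrite 1 [hδ]
        simp only [sum_inner, real_inner_smul_left]
    _ ≤ 0 := sum_nonpos fun t ht => by
        rcases (hc t ht).eq_or_lt with h0 | hpos
        · rw [← h0, zero_mul]
        · exact mul_nonpos_of_nonneg_of_nonpos hpos.le (H t ht hpos)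

end Reflection

namespace NRootSystem

variable {R : NRootSystem V}

lemma inner_self_pos {γ : V} (hγ : γ ∈ R.Φ) : 0 < ⟪γ, γ⟫ :=
  one_pos.trans_le (R.norm_one_le γ hγ)

lemma ne_zero_of_mem {γ : V} (hγ : γ ∈ R.Φ) : γ ≠ 0 :=
  fun h => R.zero_not_mem (h ▸ hγ)

lemma inner_self_le_r {γ : V} (hγ : γ ∈ R.Φ) : ⟪γ, γ⟫ ≤ R.r :=
  le_sup' (fun α => ⟪α, α⟫) hγ

lemma neg_mem {γ : V} (hγ : γ ∈ R.Φ) : -γ ∈ R.Φ := by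
  simpa [sref_self] using R.reflect_mem γ hγ γ hγ

lemma exists_cpair_eq_intCast {x γ : V} (hx : x ∈ R.Φ) (hγ : γ ∈ R.Φ) :
    ∃ n : ℤ, cpair x γ = n := by
  obtain ⟨n, hn⟩ := R.pairing_int γ hγ x hx
  exact ⟨n, by rw [cpair, hn, mul_div_cancel_right₀ _ (inner_self_pos hγ).ne']⟩

lemma isLong_sref {x γ : V} (hx : x ∈ R.Φ) (hγ : R.IsLong γ) : R.IsLong (sref x γ) :=
  ⟨R.reflect_mem x hx γ hγ.1, by rw [LinearIsometryEquiv.inner_map_map, hγ.2]⟩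

lemma isLong_neg {γ : V} (hγ : R.IsLong γ) : R.IsLong (-γ) :=
  ⟨neg_mem hγ.1, by rw [inner_neg_neg, hγ.2]⟩

/-- Strict Cauchy–Schwarz (`s` is not proportional to `β`, the system being reduced) together
with `(s|s) ≤ (β|β)` gives `⟨s, β∨⟩² < 4`. -/
lemma abs_cpair_le_one {s β : V} (hs : s ∈ R.Φ) (hβ : R.IsLong β) (hsβ : s ≠ β)
    (hsβ' : s ≠ -β) : ∃ n : ℤ, cpair s β = n ∧ |n| ≤ 1 := by
  obtain ⟨n, hn⟩ := exists_cpair_eq_intCast hs hβ.1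
  refine ⟨n, hn, ?_⟩
  have hββ := inner_self_pos hβ.1
  have hss : ⟪s, s⟫ ≤ ⟪β, β⟫ := hβ.2 ▸ inner_self_le_r hs
  have hCS : |⟪s, β⟫| < ‖s‖ * ‖β‖ := by
    refine (abs_real_inner_le_norm s β).lt_of_ne fun heq => ?_
    obtain ⟨c, -, hc⟩ :=
      (norm_inner_eq_norm_iff (𝕜 := ℝ) (ne_zero_of_mem hs) (ne_zero_of_mem hβ.1)).1 heq
    rcases R.reduced s hs c (hc ▸ hβ.1) with rfl | rfl
    · exact hsβ (by simp [hc])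
    · exact hsβ' (by simp [hc])
  have hsq : ⟪s, β⟫ ^ 2 < ⟪s, s⟫ * ⟪β, β⟫ := by
    rw [real_inner_self_eq_norm_sq, real_inner_self_eq_norm_sq, ← mul_pow]
    exact sq_lt_sq' (by linarith [neg_abs_le ⟪s, β⟫]) (lt_of_abs_lt hCS)
  have h2 : 2 * ⟪s, β⟫ = n * ⟪β, β⟫ := by rw [← hn, cpair_mul_inner_self hββ.ne']
  have hn4 : (n : ℝ) ^ 2 * ⟪β, β⟫ ^ 2 < 4 * ⟪β, β⟫ ^ 2 :=
    calc (n : ℝ) ^ 2 * ⟪β, β⟫ ^ 2 = 4 * ⟪s, β⟫ ^ 2 := by rw [← mul_pow, ← h2]; ring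
      _ < 4 * (⟪s, s⟫ * ⟪β, β⟫) := by linarith
      _ ≤ 4 * ⟪β, β⟫ ^ 2 := by nlinarith
  replace hn4 := lt_of_mul_lt_mul_right hn4 (sq_nonneg _)
  have : n ^ 2 < 4 := by exact_mod_cast hn4
  nlinarith [abs_mul_abs_self n, abs_nonneg n]

lemma cpair_mul_inner_self_eq_r {s x : V} (hs : s ∈ R.Φ) (hx : R.IsLong x)
    (hsx : cpair s x = 1) : cpair x s * ⟪s, s⟫ = R.r := by
  rw [cpair_mul_inner_self (inner_self_pos hs).ne', real_inner_comm,
    ← cpair_mul_inner_self (inner_self_pos hx.1).ne', hsx, one_mul, hx.2]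

end NRootSystem

namespace Base

open NRootSystem

variable {R : NRootSystem V} (B : Base R)

lemma coeff_eq_of_eq_sum {γ : V} (hγ : γ ∈ R.Φ) {f : V → ℤ}
    (hf : γ = ∑ t ∈ B.Δ, (f t : ℝ) • t) {t : V} (ht : t ∈ B.Δ) : B.coeff γ t = f t := by
  have key : ∑ u : B.Δ, ((B.coeff γ u - f u : ℤ) : ℝ) • (u : V) = 0 := by
    rw [sum_coe_sort B.Δ fun u => ((B.coeff γ u - f u : ℤ) : ℝ) • u]
    simp only [Int.cast_sub, sub_smul, sum_sub_distrib, ← B.coeff_spec γ hγ, ← hf, sub_self]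
  have : ((B.coeff γ t - f t : ℤ) : ℝ) = 0 := Fintype.linearIndependent_iff.mp B.indep _ key ⟨t, ht⟩
  exact sub_eq_zero.mp (by exact_mod_cast this)

lemma coeff_neg {γ : V} (hγ : γ ∈ R.Φ) {t : V} (ht : t ∈ B.Δ) :
    B.coeff (-γ) t = -B.coeff γ t :=
  B.coeff_eq_of_eq_sum (neg_mem hγ) (f := fun u => -B.coeff γ u) (by
    conv_lhs => rw [B.coeff_spec γ hγ]
    simp [neg_smul]) ht

lemma coeff_of_mem {s : V} (hs : s ∈ B.Δ) {t : V} (ht : t ∈ B.Δ) :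
    B.coeff s t = if t = s then 1 else 0 :=
  B.coeff_eq_of_eq_sum (B.subset hs) (f := fun u => if u = s then 1 else 0)
    (by simp [apply_ite, ite_smul, hs]) ht

lemma coeff_sref {x s : V} (hx : x ∈ R.Φ) (hs : s ∈ B.Δ) {m : ℤ} (hm : cpair x s = m)
    {t : V} (ht : t ∈ B.Δ) : B.coeff (sref s x) t = B.coeff x t - if t = s then m else 0 :=
  B.coeff_eq_of_eq_sum (R.reflect_mem s (B.subset hs) x hx)
    (f := fun u => B.coeff x u - if u = s then m else 0) (by
      rw [sref_apply, hm]
      conv_lhs => rw [B.coeff_spec x hx]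
      simp only [Int.cast_sub, sub_smul, sum_sub_distrib, Int.cast_ite, Int.cast_zero, ite_smul,
        zero_smul, sum_ite_eq', if_pos hs]) ht

lemma ht_sref {x s : V} (hx : x ∈ R.Φ) (hs : s ∈ B.Δ) {m : ℤ} (hm : cpair x s = m) :
    B.ht (sref s x) = B.ht x - m := by
  rw [ht, sum_congr rfl fun t ht => B.coeff_sref hx hs hm ht, sum_sub_distrib,
    sum_ite_eq', if_pos hs, ht]

lemma ht_nonneg {γ : V} (hγ : B.IsPos γ) : 0 ≤ B.ht γ :=
  sum_nonneg hγ.2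

lemma ht_le_ht {α β : V} (hle : ∀ t ∈ B.Δ, B.coeff α t ≤ B.coeff β t) : B.ht α ≤ B.ht β :=
  sum_le_sum hle

lemma isPos_of_mem {s : V} (hs : s ∈ B.Δ) : B.IsPos s :=
  ⟨B.subset hs, fun t ht => by rw [B.coeff_of_mem hs ht]; split_ifs <;> omega⟩

lemma isPos_of_le {α β : V} (hα : B.IsPos α) (hβ : β ∈ R.Φ)
    (hle : ∀ t ∈ B.Δ, B.coeff α t ≤ B.coeff β t) : B.IsPos β :=
  ⟨hβ, fun t ht => (hα.2 t ht).trans (hle t ht)⟩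

lemma isPos_neg_of_isNeg {γ : V} (hγ : B.IsNeg γ) : B.IsPos (-γ) :=
  ⟨neg_mem hγ.1, fun t ht => by rw [B.coeff_neg hγ.1 ht]; linarith [hγ.2 t ht]⟩

lemma not_isPos_neg {γ : V} (hγ : B.IsPos γ) : ¬B.IsPos (-γ) := by
  refine fun hneg => ne_zero_of_mem hγ.1 ?_
  rw [B.coeff_spec γ hγ.1]
  refine sum_eq_zero fun t ht => ?_
  have h1 := hneg.2 t ht
  rw [B.coeff_neg hγ.1 ht] at h1
  rw [show B.coeff γ t = 0 by linarith [hγ.2 t ht], Int.cast_zero, zero_smul]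

lemma eq_of_isPos_of_coeff_eq_zero {β s : V} (hβ : B.IsPos β) (hs : s ∈ B.Δ)
    (h0 : ∀ t ∈ B.Δ, t ≠ s → B.coeff β t = 0) : β = s := by
  have hβs : β = (B.coeff β s : ℝ) • s := by
    conv_lhs => rw [B.coeff_spec β hβ.1]
    exact sum_eq_single_of_mem s hs fun t ht hts => by rw [h0 t ht hts, Int.cast_zero, zero_smul]
  rcases R.reduced s (B.subset hs) _ (hβs ▸ hβ.1) with h1 | h1
  · rw [hβs, h1, one_smul]
  · have : B.coeff β s = -1 := by exact_mod_cast h1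
    linarith [hβ.2 s hs]

lemma eq_of_isPos_of_le_mem {α s : V} (hα : B.IsPos α) (hs : s ∈ B.Δ)
    (hle : ∀ t ∈ B.Δ, B.coeff α t ≤ B.coeff s t) : α = s :=
  B.eq_of_isPos_of_coeff_eq_zero hα hs fun t ht hts => by
    have := hle t ht
    rw [B.coeff_of_mem hs ht, if_neg hts] at this
    linarith [hα.2 t ht]

lemma isPos_sref {β s : V} (hβ : B.IsPos β) (hs : s ∈ B.Δ) (hβs : β ≠ s) :
    B.IsPos (sref s β) := by
  obtain ⟨t, ht, hts, hβt⟩ : ∃ t ∈ B.Δ, t ≠ s ∧ B.coeff β t ≠ 0 := by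
    by_contra! H
    exact hβs (B.eq_of_isPos_of_coeff_eq_zero hβ hs H)
  obtain ⟨m, hm⟩ := exists_cpair_eq_intCast hβ.1 (B.subset hs)
  have hmem := R.reflect_mem s (B.subset hs) β hβ.1
  have hcoeff := B.coeff_sref hβ.1 hs hm ht
  rw [if_neg hts, sub_zero] at hcoeff
  refine ⟨hmem, (B.coeff_sign _ hmem).resolve_right fun hneg => ?_⟩
  have := hneg t ht
  have := hβ.2 t ht
  omega

/-- The coordinates of the coroot `γ∨` in the basis of simple coroots. -/
def corootCoeff (γ t : V) : ℝ := (B.coeff γ t : ℝ) * ⟪t, t⟫ / ⟪γ, γ⟫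

lemma htv_eq_sum_corootCoeff (γ : V) : B.htv γ = ∑ t ∈ B.Δ, B.corootCoeff γ t := rfl

lemma corootCoeff_neg {γ : V} (hγ : γ ∈ R.Φ) {t : V} (ht : t ∈ B.Δ) :
    B.corootCoeff (-γ) t = -B.corootCoeff γ t := by
  rw [corootCoeff, corootCoeff, B.coeff_neg hγ ht, inner_neg_neg, Int.cast_neg, neg_mul,
    neg_div]

lemma corootCoeff_of_mem {s : V} (hs : s ∈ B.Δ) {t : V} (ht : t ∈ B.Δ) :
    B.corootCoeff s t = if t = s then 1 else 0 := by
  rw [corootCoeff, B.coeff_of_mem hs ht]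
  split_ifs with hts
  · rw [hts, Int.cast_one, one_mul, div_self (inner_self_pos (B.subset hs)).ne']
  · rw [Int.cast_zero, zero_mul, zero_div]

lemma corootCoeff_sref {x s : V} (hx : x ∈ R.Φ) (hs : s ∈ B.Δ) {t : V} (ht : t ∈ B.Δ) :
    B.corootCoeff (sref s x) t = B.corootCoeff x t - if t = s then cpair s x else 0 := by
  obtain ⟨m, hm⟩ := exists_cpair_eq_intCast hx (B.subset hs)
  have hms : (m : ℝ) * ⟪s, s⟫ = 2 * ⟪x, s⟫ :=
    hm ▸ cpair_mul_inner_self (inner_self_pos (B.subset hs)).ne'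
  rw [corootCoeff, corootCoeff, B.coeff_sref hx hs hm ht, LinearIsometryEquiv.inner_map_map]
  split_ifs with hts
  · rw [hts, cpair, real_inner_comm x s, Int.cast_sub, sub_mul, hms, sub_div]
  · rw [sub_zero, sub_zero]

lemma htv_sref {x s : V} (hx : x ∈ R.Φ) (hs : s ∈ B.Δ) :
    B.htv (sref s x) = B.htv x - cpair s x := by
  rw [htv_eq_sum_corootCoeff, sum_congr rfl fun t ht => B.corootCoeff_sref hx hs ht,
    sum_sub_distrib, sum_ite_eq', if_pos hs, htv_eq_sum_corootCoeff]

lemma htv_neg {γ : V} (hγ : γ ∈ R.Φ) : B.htv (-γ) = -B.htv γ := by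
  rw [htv_eq_sum_corootCoeff, sum_congr rfl fun t ht => B.corootCoeff_neg hγ ht,
    sum_neg_distrib, htv_eq_sum_corootCoeff]

/-- A positive non-simple root `γ` has a simple `s` with `(s|γ) > 0`; then `s_s γ` is a positive
root of smaller height whose coroot coordinates differ from those of `γ` by `⟨s, γ∨⟩ ∈ ℤ`
at `s` only. -/
lemma exists_corootCoeff_eq_intCast_of_isPos {γ : V} (hγ : B.IsPos γ) {t : V} (ht : t ∈ B.Δ) :
    ∃ n : ℤ, B.corootCoeff γ t = n := by
  induction hn : (B.ht γ).toNat using Nat.strong_induction_on generalizing γ with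
  | _ n ih =>
  by_cases hγΔ : γ ∈ B.Δ
  · rw [B.corootCoeff_of_mem hγΔ ht]
    split_ifs
    exacts [⟨1, Int.cast_one.symm⟩, ⟨0, Int.cast_zero.symm⟩]
  obtain ⟨s, hs, -, hsγ⟩ := exists_pos_inner_of_eq_sum_smul
    (fun t ht => by exact_mod_cast hγ.2 t ht) (B.coeff_spec γ hγ.1) (ne_zero_of_mem hγ.1)
  obtain ⟨m, hm⟩ := exists_cpair_eq_intCast hγ.1 (B.subset hs)
  have hm0 : 0 < m := by
    have : (0 : ℝ) < m := by
      rw [← hm, cpair, real_inner_comm]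
      exact div_pos (by linarith) (inner_self_pos (B.subset hs))
    exact_mod_cast this
  have hγs : γ ≠ s := fun h => hγΔ (h ▸ hs)
  have hγ' := B.isPos_sref hγ hs hγs
  have hht := B.ht_sref hγ.1 hs hm
  obtain ⟨k, hk⟩ := ih _ (by have := B.ht_nonneg hγ'; omega) hγ' rfl
  obtain ⟨c, hc⟩ := exists_cpair_eq_intCast (B.subset hs) hγ.1
  rw [B.corootCoeff_sref hγ.1 hs ht, hc] at hk
  refine ⟨k + if t = s then c else 0, ?_⟩
  split_ifs at hk ⊢ <;> push_cast <;> linarith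

lemma exists_corootCoeff_eq_intCast {γ : V} (hγ : γ ∈ R.Φ) {t : V} (ht : t ∈ B.Δ) :
    ∃ n : ℤ, B.corootCoeff γ t = n := by
  rcases B.coeff_sign γ hγ with hpos | hneg
  · exact B.exists_corootCoeff_eq_intCast_of_isPos ⟨hγ, hpos⟩ ht
  · obtain ⟨n, hn⟩ := B.exists_corootCoeff_eq_intCast_of_isPos (B.isPos_neg_of_isNeg ⟨hγ, hneg⟩) ht
    refine ⟨-n, ?_⟩
    rw [B.corootCoeff_neg hγ ht] at hn
    rw [Int.cast_neg, ← hn, neg_neg]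

/-- Coroot coordinates are integers, so the `s`-coordinates of two long roots differ by a
multiple of `r / (s|s)`. -/
lemma r_le_coeff_sub_mul_inner_self {α β s : V} (hα : R.IsLong α) (hβ : R.IsLong β)
    (hs : s ∈ B.Δ) (hlt : B.coeff α s < B.coeff β s) :
    R.r ≤ ((B.coeff β s - B.coeff α s : ℤ) : ℝ) * ⟪s, s⟫ := by
  obtain ⟨a, ha⟩ := B.exists_corootCoeff_eq_intCast hα.1 hs
  obtain ⟨b, hb⟩ := B.exists_corootCoeff_eq_intCast hβ.1 hs
  have hr : 0 < R.r := hα.2 ▸ inner_self_pos hα.1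
  rw [corootCoeff, hα.2, div_eq_iff hr.ne'] at ha
  rw [corootCoeff, hβ.2, div_eq_iff hr.ne'] at hb
  have hdiff : ((B.coeff β s - B.coeff α s : ℤ) : ℝ) * ⟪s, s⟫ = ((b - a : ℤ) : ℝ) * R.r := by
    push_cast
    linarith
  have hba : (0 : ℝ) < (b - a : ℤ) := by
    refine pos_of_mul_pos_left (hdiff ▸ mul_pos ?_ (inner_self_pos (B.subset hs))) hr.le
    exact_mod_cast sub_pos.2 hlt
  have hba' : 0 < b - a := by exact_mod_cast hba
  have hba1 : (1 : ℝ) ≤ (b - a : ℤ) := by exact_mod_cast (show 1 ≤ b - a by omega)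
  rw [hdiff]
  nlinarith

lemma exists_coeff_lt_inner_lt {α β : V} (hα : α ∈ R.Φ) (hβ : β ∈ R.Φ)
    (hle : ∀ t ∈ B.Δ, B.coeff α t ≤ B.coeff β t) (hne : β ≠ α) :
    ∃ s ∈ B.Δ, B.coeff α s < B.coeff β s ∧ ⟪s, α⟫ < ⟪s, β⟫ := by
  have hδ : β - α = ∑ t ∈ B.Δ, ((B.coeff β t - B.coeff α t : ℤ) : ℝ) • t := by
    conv_lhs => rw [B.coeff_spec β hβ, B.coeff_spec α hα]
    simp only [Int.cast_sub, sub_smul, sum_sub_distrib]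
  obtain ⟨s, hs, hpos, hinner⟩ := exists_pos_inner_of_eq_sum_smul
    (fun t ht => by simpa using hle t ht) hδ (sub_ne_zero.mpr hne)
  refine ⟨s, hs, sub_pos.mp (by exact_mod_cast hpos), ?_⟩
  rw [inner_sub_right] at hinner
  linarith

lemma level_of_isPos (h : V) {γ : V} (hγ : B.IsPos γ) : B.level h γ = B.htv h - B.htv γ :=
  if_pos hγ

lemma level_of_not_isPos (h : V) {γ : V} (hγ : ¬B.IsPos γ) :
    B.level h γ = B.htv h - B.htv γ - 1 :=
  if_neg hγ

lemma cpair_eq_one_of_inner_pos {s x : V} (hs : s ∈ B.Δ) (hx : R.IsLong x) (hxp : B.IsPos x)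
    (hxs : x ≠ s) (hsx : 0 < ⟪s, x⟫) : cpair s x = 1 := by
  obtain ⟨n, hn, hn1⟩ := abs_cpair_le_one (B.subset hs) hx (Ne.symm hxs)
    fun h => B.not_isPos_neg hxp (h ▸ B.isPos_of_mem hs)
  have hpos : (0 : ℝ) < n := hn ▸ div_pos (by linarith) (inner_self_pos hx.1)
  have : n = 1 := by
    have := abs_le.mp hn1
    have : 0 < n := by exact_mod_cast hpos
    omega
  rw [hn, this, Int.cast_one]

lemma step_sref (h : V) {s x : V} (hs : s ∈ B.Δ) (hx : R.IsLong x) (hxp : B.IsPos x)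
    (hyp : B.IsPos (sref s x)) (hsx : cpair s x = 1) : B.Step h s x (sref s x) :=
  ⟨hx, isLong_sref (B.subset hs) hx, B.isPos_of_mem hs, rfl, by
    rw [B.level_of_isPos h hyp, B.level_of_isPos h hxp, B.htv_sref hx.1 hs, hsx]
    ring⟩

lemma step_neg {h s x y : V} (hxy : B.Step h s x y) (hx : B.IsPos x) (hy : B.IsPos y) :
    B.Step h s (-y) (-x) := by
  obtain ⟨hxl, hyl, hs, rfl, hlev⟩ := hxy
  refine ⟨isLong_neg hyl, isLong_neg hxl, hs, by rw [map_neg, sref_sref], ?_⟩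
  rw [B.level_of_isPos h hy, B.level_of_isPos h hx] at hlev
  rw [B.level_of_not_isPos h (B.not_isPos_neg hx), B.level_of_not_isPos h (B.not_isPos_neg hy),
    B.htv_neg hxl.1, B.htv_neg hyl.1]
  linarith

def SimpleStep (h β α : V) : Prop := ∃ s ∈ B.Δ, B.Step h s β α

lemma hasSimplePath_of_reflTransGen {h β α : V} (H : ReflTransGen (B.SimpleStep h) β α) :
    B.HasSimplePath h β α := by
  induction H using ReflTransGen.head_induction_on with
  | refl => exact ⟨0, Fin.elim0, ⟨fun _ => α, rfl, rfl, fun i => i.elim0⟩, fun i => i.elim0⟩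
  | head hxy _ ih =>
    obtain ⟨s, hs, hstep⟩ := hxy
    obtain ⟨n, g, ⟨c, hc0, hcl, hsteps⟩, hg⟩ := ih
    refine ⟨n + 1, Fin.cons s g, ⟨Fin.cons _ c, rfl, ?_, ?_⟩, Fin.cases hs hg⟩
    · rw [← Fin.succ_last, Fin.cons_succ, hcl]
    · exact Fin.cases (by simpa [hc0] using hstep)
        fun i => by simpa [← Fin.succ_castSucc] using hsteps i

lemma exists_cpair_eq_pos_le_coeff_sub {α β s x : V} (hα : R.IsLong α) (hβ : R.IsLong β)
    (hx : R.IsLong x) (hs : s ∈ B.Δ) (hsx : cpair s x = 1) (hlt : B.coeff α s < B.coeff β s) :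
    ∃ m : ℤ, cpair x s = m ∧ 0 < m ∧ m ≤ B.coeff β s - B.coeff α s := by
  obtain ⟨m, hm⟩ := exists_cpair_eq_intCast hx.1 (B.subset hs)
  have hss := inner_self_pos (B.subset hs)
  have hmr : (m : ℝ) * ⟪s, s⟫ = R.r := hm ▸ cpair_mul_inner_self_eq_r (B.subset hs) hx hsx
  have hm_pos : (0 : ℝ) < m := pos_of_mul_pos_left (hmr ▸ hx.2 ▸ inner_self_pos hx.1) hss.le
  refine ⟨m, hm, by exact_mod_cast hm_pos, ?_⟩
  exact_mod_cast le_of_mul_le_mul_right (hmr ▸ B.r_le_coeff_sub_mul_inner_self hα hβ hs hlt) hss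

lemma step_sref_le_of_inner_pos (h : V) {α β s : V} (hα : R.IsLong α) (hβ : R.IsLong β)
    (hαp : B.IsPos α) (hle : ∀ t ∈ B.Δ, B.coeff α t ≤ B.coeff β t) (hne : β ≠ α)
    (hs : s ∈ B.Δ) (hlt : B.coeff α s < B.coeff β s) (hsβ : 0 < ⟪s, β⟫) :
    B.Step h s β (sref s β) ∧ B.IsPos (sref s β) ∧
      (∀ t ∈ B.Δ, B.coeff α t ≤ B.coeff (sref s β) t) ∧ B.ht (sref s β) < B.ht β := by
  have hβp := B.isPos_of_le hαp hβ.1 hle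
  have hβs : β ≠ s := by
    rintro rfl
    exact hne (B.eq_of_isPos_of_le_mem hαp hs hle).symm
  have hcp := B.cpair_eq_one_of_inner_pos hs hβ hβp hβs hsβ
  obtain ⟨m, hm, hm_pos, hm_le⟩ := B.exists_cpair_eq_pos_le_coeff_sub hα hβ hβ hs hcp hlt
  have hβ'p := B.isPos_sref hβp hs hβs
  refine ⟨B.step_sref h hs hβ hβp hβ'p hcp, hβ'p, fun t ht => ?_, ?_⟩
  · rw [B.coeff_sref hβ.1 hs hm ht]
    split_ifs with hts
    · subst hts; omega
    · simpa using hle t ht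
  · rw [B.ht_sref hβ.1 hs hm]
    omega

lemma step_sref_le_of_inner_neg (h : V) {α β s : V} (hα : R.IsLong α) (hβ : R.IsLong β)
    (hαp : B.IsPos α) (hle : ∀ t ∈ B.Δ, B.coeff α t ≤ B.coeff β t)
    (hs : s ∈ B.Δ) (hlt : B.coeff α s < B.coeff β s) (hsα : ⟪s, α⟫ < 0) :
    B.Step h s (sref s α) α ∧ B.IsPos (sref s α) ∧
      (∀ t ∈ B.Δ, B.coeff (sref s α) t ≤ B.coeff β t) ∧ B.ht α < B.ht (sref s α) := by
  have hαs : α ≠ s := by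
    rintro rfl
    linarith [inner_self_pos hα.1]
  set x := sref s α with hx
  have hxα : sref s x = α := sref_sref s α
  have hxl : R.IsLong x := isLong_sref (B.subset hs) hα
  have hxp : B.IsPos x := B.isPos_sref hαp hs hαs
  have hxs : x ≠ s := fun hxs => B.not_isPos_neg (B.isPos_of_mem hs) <| by
    rwa [← hxα, hxs, sref_self] at hαp
  have hcp := B.cpair_eq_one_of_inner_pos hs hxl hxp hxs
    (by rw [hx, inner_sref_self_left]; linarith)
  obtain ⟨m, hm, hm_pos, hm_le⟩ := B.exists_cpair_eq_pos_le_coeff_sub hα hβ hxl hs hcp hlt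
  refine ⟨hxα ▸ B.step_sref h hs hxl hxp (hxα ▸ hαp) hcp, hxp, fun t ht => ?_, ?_⟩
  · have hcoeff := B.coeff_sref hxl.1 hs hm ht
    rw [hxα] at hcoeff
    split_ifs at hcoeff with hts
    · subst hts; omega
    · rw [sub_zero] at hcoeff
      exact hcoeff ▸ hle t ht
  · rw [← hxα, B.ht_sref hxl.1 hs hm]
    omega

theorem reflTransGen_of_isPos_of_le (h : V) {α β : V} (hα : R.IsLong α) (hβ : R.IsLong β)
    (hαp : B.IsPos α) (hle : ∀ t ∈ B.Δ, B.coeff α t ≤ B.coeff β t) :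
    ReflTransGen (fun x y => B.SimpleStep h x y ∧ B.IsPos x ∧ B.IsPos y) β α := by
  induction hn : (B.ht β - B.ht α).toNat using Nat.strong_induction_on generalizing α β with
  | _ n ih =>
  rcases eq_or_ne β α with rfl | hne
  · rfl
  have hβp := B.isPos_of_le hαp hβ.1 hle
  obtain ⟨s, hs, hlt, hinner⟩ := B.exists_coeff_lt_inner_lt hα.1 hβ.1 hle hne
  by_cases hsβ : 0 < ⟪s, β⟫
  · obtain ⟨hstep, hβ'p, hle', hht⟩ :=
      B.step_sref_le_of_inner_pos h hα hβ hαp hle hne hs hlt hsβ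
    have := B.ht_le_ht hle'
    exact .head ⟨⟨s, hs, hstep⟩, hβp, hβ'p⟩ (ih _ (by omega) hα hstep.2.1 hαp hle' rfl)
  · obtain ⟨hstep, hα'p, hle', hht⟩ :=
      B.step_sref_le_of_inner_neg h hα hβ hαp hle hs hlt (by linarith)
    have := B.ht_le_ht hle'
    exact .tail (ih _ (by omega) hstep.1 hβ hα'p hle' rfl) ⟨⟨s, hs, hstep⟩, hα'p, hαp⟩

end Base

theorem simplePath_of_le_general (R : NRootSystem V) (B : Base R) {h : V}
    {α β : V} (hα : R.IsLong α) (hβ : R.IsLong β)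
    (hle : ∀ s ∈ B.Δ, B.coeff α s ≤ B.coeff β s)
    (hcase : B.IsPos α ∨ B.IsNeg β) :
    B.HasSimplePath h β α := by
  apply B.hasSimplePath_of_reflTransGen
  rcases hcase with hαp | hβn
  · refine ReflTransGen.mono ?_ _ _ (B.reflTransGen_of_isPos_of_le h hα hβ hαp hle)
    exact fun _ _ hxy => hxy.1
  · have hle' : ∀ t ∈ B.Δ, B.coeff (-β) t ≤ B.coeff (-α) t := fun t ht => by
      rw [B.coeff_neg hα.1 ht, B.coeff_neg hβ.1 ht, neg_le_neg_iff]
      exact hle t ht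
    have H := B.reflTransGen_of_isPos_of_le h (NRootSystem.isLong_neg hβ)
      (NRootSystem.isLong_neg hα) (B.isPos_neg_of_isNeg hβn) hle'
    have H' := ReflTransGen.lift (p := Function.swap (B.SimpleStep h)) (fun x => -x) ?_ _ _ H
    · simpa using reflTransGen_swap.mp H'
    · exact fun _ _ ⟨⟨s, hs, hstep⟩, hx, hy⟩ => ⟨s, hs, B.step_neg hstep hx hy⟩

/-- let `α` and `β` be long roots with `α ≤ β` in the order determined
by `Δ`. If `0 < α ≤ β`, or if `α ≤ β < 0`, then there is a simple path from `β`
to `α`. -/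
theorem simplePath_of_le (R : NRootSystem V) (B : Base R) {h : V}
    (hh : B.IsHighest h) {α β : V} (hα : R.IsLong α) (hβ : R.IsLong β)
    (hle : ∀ s ∈ B.Δ, B.coeff α s ≤ B.coeff β s)
    (hcase : B.IsPos α ∨ B.IsNeg β) :
    B.HasSimplePath h β α :=
  simplePath_of_le_general R B hα hβ hle hcase
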